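/- arXiv:2210.17156 — 9 statements merged into one kernel-verified Lean document; each statement's English description precedes it below -/
import Mathlib

section
/- For every x ∈ [0,1]^n, the operator norm (with respect to the Euclidean norm on ℝ^n) of the Jacobian matrix of F at x is at most 1 - μ + β·ρ(R). -/
open Filter Finset

/-- The MMCA map `F`. -/
noncomputable def F {n : ℕ} (R : Matrix (Fin n) (Fin n) ℝ) (β μ : ℝ) (x : Fin n → ℝ) :
    Fin n → ℝ :=
  fun i => 1 - (1 - (1 - μ) * x i) * ∏ j, (1 - β * R i j * x j)

/-- Irreducibility of a (nonnegative) square matrix. -/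
def MatIrred {n : ℕ} (R : Matrix (Fin n) (Fin n) ℝ) : Prop :=
  ∀ i j : Fin n, ∃ k : ℕ, 0 < k ∧ (R ^ k) i j ≠ 0

/-- Spectral radius of a real matrix, as the supremum of the absolute values of the
real spectrum (appropriate here since `R` is symmetric). -/
noncomputable def specRad {n : ℕ} (R : Matrix (Fin n) (Fin n) ℝ) : ℝ :=
  sSup {r : ℝ | ∃ z ∈ spectrum ℝ R, |z| = r}

/-!
On `[0,1]^n` the Jacobian entry `∂F_i/∂x_k` equals
`(1-μ) δ_ik ∏_j (1 - β r_ij x_j) + β r_ik (1 - (1-μ) x_i) ∏_{l ≠ k} (1 - β r_il x_l)`,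
a combination of products of numbers in `[0,1]`, so `|J| ≤ (1-μ) I + β R` entrywise.
Entrywise domination by a nonnegative matrix dominates the Euclidean operator norm (test it on
`|v|`), the triangle inequality gives `‖(1-μ) I + β R‖ ≤ 1 - μ + β ‖R‖`, and the operator norm
of the symmetric matrix `R` is its spectral radius.
-/

namespace Matrix

variable {ι : Type*} [Fintype ι] [DecidableEq ι]

theorem norm_toEuclideanCLM_le_of_abs_le {A B : Matrix ι ι ℝ} (h : ∀ i j, |A i j| ≤ B i j) :
    ‖toEuclideanCLM (𝕜 := ℝ) A‖ ≤ ‖toEuclideanCLM (𝕜 := ℝ) B‖ := by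
  refine ContinuousLinearMap.opNorm_le_bound _ (norm_nonneg _) fun v => ?_
  let w : EuclideanSpace ℝ ι := WithLp.toLp 2 fun i => |v i|
  have hw : ‖w‖ = ‖v‖ := by simp [w, EuclideanSpace.norm_eq]
  have hcoord (i : ι) : |toEuclideanCLM (𝕜 := ℝ) A v i| ≤ |toEuclideanCLM (𝕜 := ℝ) B w i| :=
    calc |∑ j, A i j * v j| ≤ ∑ j, |A i j| * abs (v j) := by
          simpa only [abs_mul] using abs_sum_le_sum_abs (fun j => A i j * v j) univ
      _ ≤ ∑ j, B i j * abs (v j) := by gcongr with j; exact h i j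
      _ ≤ |∑ j, B i j * abs (v j)| := le_abs_self _
  calc ‖toEuclideanCLM (𝕜 := ℝ) A v‖ ≤ ‖toEuclideanCLM (𝕜 := ℝ) B w‖ := by
        simp only [EuclideanSpace.norm_eq, Real.norm_eq_abs]
        exact Real.sqrt_le_sqrt (sum_le_sum fun i _ => pow_le_pow_left₀ (abs_nonneg _) (hcoord i) 2)
    _ ≤ ‖toEuclideanCLM (𝕜 := ℝ) B‖ * ‖v‖ := hw ▸ (toEuclideanCLM (𝕜 := ℝ) B).le_opNorm w

theorem IsHermitian.norm_toEuclideanCLM_le {A : Matrix ι ι ℝ} (hA : A.IsHermitian) {c : ℝ}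
    (h : ∀ z ∈ spectrum ℝ A, |z| ≤ c) (hc : 0 ≤ c) :
    ‖toEuclideanCLM (𝕜 := ℝ) A‖ ≤ c := by
  have hT : IsSelfAdjoint (toEuclideanCLM (𝕜 := ℝ) A) := hA.isSelfAdjoint.map _
  have hspec : spectralRadius ℝ (toEuclideanCLM (𝕜 := ℝ) A) ≤ ENNReal.ofReal c := by
    refine iSup₂_le fun z hz => ?_
    rw [AlgEquiv.spectrum_eq] at hz
    exact (ENNReal.le_ofReal_iff_toReal_le ENNReal.coe_ne_top hc).2 (h z hz)
  rw [ContinuousLinearMap.spectralRadius_eq_nnnorm _ hT] at hspec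
  exact (ENNReal.le_ofReal_iff_toReal_le ENNReal.coe_ne_top hc).1 hspec

theorem norm_toEuclideanCLM_smul_one_add_smul_le {a b : ℝ} (ha : 0 ≤ a) (hb : 0 ≤ b)
    (A : Matrix ι ι ℝ) :
    ‖toEuclideanCLM (𝕜 := ℝ) (a • (1 : Matrix ι ι ℝ) + b • A)‖
      ≤ a + b * ‖toEuclideanCLM (𝕜 := ℝ) A‖ := by
  rw [map_add, map_smul, map_smul, map_one]
  calc _ ≤ ‖a • (1 : EuclideanSpace ℝ ι →L[ℝ] EuclideanSpace ℝ ι)‖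
          + ‖b • toEuclideanCLM (𝕜 := ℝ) A‖ := norm_add_le _ _
    _ ≤ a * 1 + b * ‖toEuclideanCLM (𝕜 := ℝ) A‖ := by
        rw [norm_smul, norm_smul, Real.norm_of_nonneg ha, Real.norm_of_nonneg hb]
        gcongr
        exact ContinuousLinearMap.norm_id_le
    _ = _ := by rw [mul_one]

end Matrix

theorem norm_toEuclideanCLM_le_specRad {n : ℕ} {R : Matrix (Fin n) (Fin n) ℝ} (hR : R.IsSymm) :
    ‖Matrix.toEuclideanCLM (𝕜 := ℝ) R‖ ≤ specRad R := by
  have hbdd : BddAbove {r : ℝ | ∃ z ∈ spectrum ℝ R, |z| = r} :=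
    (R.finite_spectrum.image abs).bddAbove
  refine (Matrix.isHermitian_iff_isSymm.2 hR).norm_toEuclideanCLM_le
    (fun z hz => le_csSup hbdd ⟨z, hz, rfl⟩) (Real.sSup_nonneg ?_)
  rintro _ ⟨z, -, rfl⟩
  exact abs_nonneg z

theorem abs_mul_add_mul_le_of_mem_unitInterval {p q a b : ℝ} (hp : p ∈ unitInterval)
    (hq : q ∈ unitInterval) (ha : 0 ≤ a) (hb : 0 ≤ b) : |p * a + q * b| ≤ a + b := by
  obtain ⟨hp0, hp1⟩ := hp
  obtain ⟨hq0, hq1⟩ := hq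
  rw [abs_of_nonneg (by positivity)]
  nlinarith

theorem hasFDerivAt_prod_one_sub_mul {ι : Type*} [Fintype ι] [DecidableEq ι] (a x : ι → ℝ) :
    HasFDerivAt (fun y : ι → ℝ => ∏ j, (1 - a j * y j))
      (-∑ j, (a j * ∏ l ∈ univ.erase j, (1 - a l * x l)) • ContinuousLinearMap.proj (R := ℝ) j) x :=
  (HasFDerivAt.finsetProd fun j _ =>
    ((hasFDerivAt_apply (𝕜 := ℝ) j x).const_mul (a j)).const_sub 1).congr_fderiv <| by
      simp only [smul_neg, smul_smul, sum_neg_distrib, mul_comm]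

theorem fderiv_F_apply_single {n : ℕ} (R : Matrix (Fin n) (Fin n) ℝ) (β μ : ℝ)
    (x : Fin n → ℝ) (i k : Fin n) :
    fderiv ℝ (fun y => F R β μ y i) x (Pi.single k 1) =
      (∏ j, (1 - β * R i j * x j)) * ((1 - μ) * (1 : Matrix (Fin n) (Fin n) ℝ) i k)
        + ((1 - (1 - μ) * x i) * ∏ l ∈ univ.erase k, (1 - β * R i l * x l)) * (β * R i k) := by
  have hg : HasFDerivAt (fun y : Fin n → ℝ => 1 - (1 - μ) * y i)
      (-((1 - μ) • ContinuousLinearMap.proj (R := ℝ) i)) x :=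
    ((hasFDerivAt_apply (𝕜 := ℝ) i x).const_mul (1 - μ)).const_sub 1
  have hP := hasFDerivAt_prod_one_sub_mul (fun j => β * R i j) x
  have hF : HasFDerivAt (fun y => F R β μ y i) _ x := (hg.mul hP).const_sub 1
  rw [hF.fderiv]
  simp only [smul_neg, neg_add_rev, neg_neg, add_apply, smul_apply,
    ContinuousLinearMap.proj_apply, Pi.single_apply, smul_eq_mul, mul_ite, mul_one, mul_zero,
    _root_.sum_apply, eq_comm, sum_ite_eq, mem_univ, ↓reduceIte, Matrix.one_apply, add_right_inj]
  ring

theorem abs_fderiv_F_apply_single_le {n : ℕ} {R : Matrix (Fin n) (Fin n) ℝ} {β μ : ℝ}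
    {x : Fin n → ℝ} (hR : ∀ i j, R i j ∈ Set.Icc (0 : ℝ) 1) (hβ : β ∈ Set.Icc (0 : ℝ) 1)
    (hμ : μ ∈ Set.Icc (0 : ℝ) 1) (hx : ∀ i, x i ∈ Set.Icc (0 : ℝ) 1) (i k : Fin n) :
    |fderiv ℝ (fun y => F R β μ y i) x (Pi.single k 1)|
      ≤ ((1 - μ) • (1 : Matrix (Fin n) (Fin n) ℝ) + β • R) i k := by
  have hfactor (l : Fin n) : 1 - β * R i l * x l ∈ unitInterval :=
    Set.Icc.mem_iff_one_sub_mem.1 (unitInterval.mul_mem (unitInterval.mul_mem hβ (hR i l)) (hx l))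
  have hself : 1 - (1 - μ) * x i ∈ unitInterval :=
    Set.Icc.mem_iff_one_sub_mem.1
      (unitInterval.mul_mem (Set.Icc.mem_iff_one_sub_mem.1 hμ) (hx i))
  have hδ : 0 ≤ (1 : Matrix (Fin n) (Fin n) ℝ) i k := by
    rw [Matrix.one_apply]; split_ifs <;> norm_num
  rw [fderiv_F_apply_single, Matrix.add_apply, Matrix.smul_apply, Matrix.smul_apply,
    smul_eq_mul, smul_eq_mul]
  exact abs_mul_add_mul_le_of_mem_unitInterval (unitInterval.prod_mem fun l _ => hfactor l)
    (unitInterval.mul_mem hself (unitInterval.prod_mem fun l _ => hfactor l))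
    (mul_nonneg (sub_nonneg.2 hμ.2) hδ) (mul_nonneg hβ.1 (hR i k).1)

theorem jacobian_opNorm_bound_general (n : ℕ) (R : Matrix (Fin n) (Fin n) ℝ)
    (hsymm : R.IsSymm) (hR : ∀ i j, R i j ∈ Set.Icc (0:ℝ) 1)
    (β μ : ℝ) (hβ : β ∈ Set.Ioo (0:ℝ) 1) (hμ : μ ∈ Set.Ioo (0:ℝ) 1)
    (x : Fin n → ℝ) (hx : ∀ i, x i ∈ Set.Icc (0:ℝ) 1) :
    ‖Matrix.toEuclideanCLM (𝕜 := ℝ)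
        (Matrix.of fun i j => fderiv ℝ (fun y => F R β μ y i) x (Pi.single j 1))‖
      ≤ 1 - μ + β * specRad R := by
  have hβ' := Set.Ioo_subset_Icc_self hβ
  have hμ' := Set.Ioo_subset_Icc_self hμ
  calc _ ≤ ‖Matrix.toEuclideanCLM (𝕜 := ℝ) ((1 - μ) • (1 : Matrix (Fin n) (Fin n) ℝ) + β • R)‖ :=
        Matrix.norm_toEuclideanCLM_le_of_abs_le (abs_fderiv_F_apply_single_le hR hβ' hμ' hx)
    _ ≤ 1 - μ + β * ‖Matrix.toEuclideanCLM (𝕜 := ℝ) R‖ :=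
        Matrix.norm_toEuclideanCLM_smul_one_add_smul_le (sub_nonneg.2 hμ'.2) hβ'.1 R
    _ ≤ 1 - μ + β * specRad R := by
        gcongr
        exacts [hβ'.1, norm_toEuclideanCLM_le_specRad hsymm]

theorem jacobian_opNorm_bound (n : ℕ) (hn : 2 ≤ n) (R : Matrix (Fin n) (Fin n) ℝ)
    (hsymm : R.IsSymm) (hR : ∀ i j, R i j ∈ Set.Icc (0:ℝ) 1)
    (hdiag : ∀ i, R i i = 0) (hirr : MatIrred R)
    (β μ : ℝ) (hβ : β ∈ Set.Ioo (0:ℝ) 1) (hμ : μ ∈ Set.Ioo (0:ℝ) 1)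
    (x : Fin n → ℝ) (hx : ∀ i, x i ∈ Set.Icc (0:ℝ) 1) :
    ‖Matrix.toEuclideanCLM (𝕜 := ℝ)
        (Matrix.of fun i j => fderiv ℝ (fun y => F R β μ y i) x (Pi.single j 1))‖
      ≤ 1 - μ + β * specRad R :=
  jacobian_opNorm_bound_general n R hsymm hR β μ hβ hμ x hx
end

section
/- The restriction of F to [0,1]^n is Lipschitz with constant 1 - μ + β·ρ(R) for the Euclidean norm: for all x, y ∈ [0,1]^n, ‖F(x) - F(y)‖₂ ≤ (1 - μ + β·ρ(R))·‖x - y‖₂. In particular, if β < β₀ then F is a contraction on [0,1]^n. -/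
open Filter Finset

/-! Each coordinate of `F` is `1` minus a product of factors in `[0,1]`, so telescoping the
product bounds `|F x - F y|` coordinatewise by `(1 - μ) v + β R v` with `v = |x - y|`. The
Euclidean norm of `R v` is then at most `ρ(R) ‖v‖`, because a symmetric matrix acts diagonally in
an orthonormal eigenbasis. -/

open Matrix WithLp

theorem norm_mul_sub_mul_le {R : Type*} [SeminormedRing R] {a b c d : R}
    (hb : ‖b‖ ≤ 1) (hc : ‖c‖ ≤ 1) : ‖a * b - c * d‖ ≤ ‖a - c‖ + ‖b - d‖ :=
  calc ‖a * b - c * d‖ = ‖(a - c) * b + c * (b - d)‖ := by noncomm_ring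
    _ ≤ ‖a - c‖ * ‖b‖ + ‖c‖ * ‖b - d‖ := norm_add_le_of_le (norm_mul_le _ _) (norm_mul_le _ _)
    _ ≤ ‖a - c‖ + ‖b - d‖ := by
      gcongr
      · exact mul_le_of_le_one_right (norm_nonneg _) hb
      · exact mul_le_of_le_one_left (norm_nonneg _) hc

theorem Finset.norm_prod_sub_prod_le {ι R : Type*} [NormedCommRing R] [NormOneClass R]
    {s : Finset ι} {f g : ι → R} (hf : ∀ i ∈ s, ‖f i‖ ≤ 1) (hg : ∀ i ∈ s, ‖g i‖ ≤ 1) :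
    ‖∏ i ∈ s, f i - ∏ i ∈ s, g i‖ ≤ ∑ i ∈ s, ‖f i - g i‖ := by
  induction s using Finset.cons_induction with
  | empty => simp
  | cons a s ha ih =>
    simp only [Finset.forall_mem_cons] at hf hg
    rw [prod_cons, prod_cons, sum_cons]
    have hprod : ‖∏ i ∈ s, f i‖ ≤ 1 :=
      (norm_prod_le _ _).trans (prod_le_one (fun _ _ => norm_nonneg _) hf.2)
    exact (norm_mul_sub_mul_le hprod hg.1).trans (add_le_add_right (ih hf.2 hg.2) _)

theorem abs_one_sub_mul_le_one {c t : ℝ} (hc : c ∈ Set.Icc (0 : ℝ) 1)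
    (ht : t ∈ Set.Icc (0 : ℝ) 1) : |1 - c * t| ≤ 1 := by
  have h0 : 0 ≤ c * t := mul_nonneg hc.1 ht.1
  have h1 : c * t ≤ 1 := mul_le_one₀ hc.2 ht.1 ht.2
  exact abs_le.2 ⟨by linarith, by linarith⟩

theorem abs_one_sub_mul_sub_one_sub_mul {c s t : ℝ} (hc : 0 ≤ c) :
    |(1 - c * s) - (1 - c * t)| = c * |t - s| := by
  rw [show (1 - c * s) - (1 - c * t) = c * (t - s) by ring, abs_mul, abs_of_nonneg hc]

theorem abs_F_sub_F_le {n : ℕ} {R : Matrix (Fin n) (Fin n) ℝ} {β μ : ℝ}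
    (hR : ∀ i j, R i j ∈ Set.Icc (0 : ℝ) 1) (hβ : β ∈ Set.Icc (0 : ℝ) 1)
    (hμ : μ ∈ Set.Icc (0 : ℝ) 1) {x y : Fin n → ℝ} (hx : ∀ i, x i ∈ Set.Icc (0 : ℝ) 1)
    (hy : ∀ i, y i ∈ Set.Icc (0 : ℝ) 1) (i : Fin n) :
    |F R β μ x i - F R β μ y i| ≤ (1 - μ) * |x i - y i| + β * ∑ j, R i j * |x j - y j| := by
  have hμ' : 1 - μ ∈ Set.Icc (0 : ℝ) 1 := ⟨by linarith [hμ.2], by linarith [hμ.1]⟩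
  have hβR : ∀ j, β * R i j ∈ Set.Icc (0 : ℝ) 1 := fun j =>
    ⟨mul_nonneg hβ.1 (hR i j).1, mul_le_one₀ hβ.2 (hR i j).1 (hR i j).2⟩
  have hprod : |∏ j, (1 - β * R i j * y j) - ∏ j, (1 - β * R i j * x j)|
      ≤ ∑ j, |(1 - β * R i j * y j) - (1 - β * R i j * x j)| :=
    norm_prod_sub_prod_le (s := univ) (f := fun j => 1 - β * R i j * y j)
      (g := fun j => 1 - β * R i j * x j) (fun j _ => abs_one_sub_mul_le_one (hβR j) (hy j))
      (fun j _ => abs_one_sub_mul_le_one (hβR j) (hx j))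
  have hprod_le_one : |∏ j, (1 - β * R i j * y j)| ≤ 1 := by
    rw [abs_prod]
    exact prod_le_one (fun _ _ => abs_nonneg _) fun j _ => abs_one_sub_mul_le_one (hβR j) (hy j)
  calc |F R β μ x i - F R β μ y i|
      = |(1 - (1 - μ) * y i) * ∏ j, (1 - β * R i j * y j)
          - (1 - (1 - μ) * x i) * ∏ j, (1 - β * R i j * x j)| := by
        congr 1; simp only [F]; ring
    _ ≤ |(1 - (1 - μ) * y i) - (1 - (1 - μ) * x i)|
          + |∏ j, (1 - β * R i j * y j) - ∏ j, (1 - β * R i j * x j)| :=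
        norm_mul_sub_mul_le (R := ℝ) hprod_le_one (abs_one_sub_mul_le_one hμ' (hx i))
    _ ≤ |(1 - (1 - μ) * y i) - (1 - (1 - μ) * x i)|
          + ∑ j, |(1 - β * R i j * y j) - (1 - β * R i j * x j)| := by gcongr
    _ = (1 - μ) * |x i - y i| + β * ∑ j, R i j * |x j - y j| := by
        rw [abs_one_sub_mul_sub_one_sub_mul hμ'.1, mul_sum]
        congr 1
        refine sum_congr rfl fun j _ => ?_
        rw [abs_one_sub_mul_sub_one_sub_mul (hβR j).1, mul_assoc]

theorem LinearMap.IsSymmetric.norm_apply_le_of_norm_eigenvalue_le {𝕜 E : Type*} [RCLike 𝕜]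
    [NormedAddCommGroup E] [InnerProductSpace 𝕜 E] [FiniteDimensional 𝕜 E] {T : E →ₗ[𝕜] E}
    (hT : T.IsSymmetric) {c : ℝ} (hc0 : 0 ≤ c)
    (hc : ∀ μ : 𝕜, Module.End.HasEigenvalue T μ → ‖μ‖ ≤ c) (v : E) : ‖T v‖ ≤ c * ‖v‖ := by
  set b := hT.eigenvectorBasis rfl
  have hsq : ‖T v‖ ^ 2 ≤ (c * ‖v‖) ^ 2 := by
    rw [← b.repr.norm_map, ← b.repr.norm_map v, EuclideanSpace.norm_sq_eq, mul_pow,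
      EuclideanSpace.norm_sq_eq, mul_sum]
    refine sum_le_sum fun i _ => ?_
    rw [hT.eigenvectorBasis_apply_self_apply, norm_mul, mul_pow]
    gcongr
    exact hc _ (hT.hasEigenvalue_eigenvalues rfl i)
  exact (pow_le_pow_iff_left₀ (norm_nonneg _) (by positivity) two_ne_zero).1 hsq

theorem abs_le_specRad {n : ℕ} {R : Matrix (Fin n) (Fin n) ℝ} {z : ℝ} (hz : z ∈ spectrum ℝ R) :
    |z| ≤ specRad R :=
  le_csSup (R.finite_real_spectrum.image _).bddAbove ⟨z, hz, rfl⟩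

theorem specRad_nonneg {n : ℕ} (R : Matrix (Fin n) (Fin n) ℝ) : 0 ≤ specRad R :=
  Real.sSup_nonneg (by rintro _ ⟨z, -, rfl⟩; exact abs_nonneg z)

theorem norm_toLp_mulVec_le_specRad {n : ℕ} {R : Matrix (Fin n) (Fin n) ℝ} (hR : R.IsSymm)
    (v : Fin n → ℝ) : ‖toLp 2 (R *ᵥ v)‖ ≤ specRad R * ‖toLp 2 v‖ :=
  (isSymmetric_toEuclideanLin_iff.2 (isHermitian_iff_isSymm.2 hR))
    |>.norm_apply_le_of_norm_eigenvalue_le (specRad_nonneg R)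
    (fun _ hμ => abs_le_specRad (by rw [← spectrum_toLpLin 2]; exact hμ.mem_spectrum))
    (toLp 2 v)

theorem sqrt_sum_sq_le_of_abs_le {ι : Type*} [Fintype ι] {a b : ι → ℝ} (h : ∀ i, |a i| ≤ b i) :
    √(∑ i, a i ^ 2) ≤ √(∑ i, b i ^ 2) :=
  Real.sqrt_le_sqrt (sum_le_sum fun i _ => sq_le_sq.2 ((h i).trans (le_abs_self _)))

theorem sqrt_sum_sq_eq_norm_toLp {ι : Type*} [Fintype ι] (a : ι → ℝ) :
    √(∑ i, a i ^ 2) = ‖toLp 2 a‖ := by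
  simp only [EuclideanSpace.norm_eq, Real.norm_eq_abs, sq_abs]

theorem lipschitz_euclidean_general (n : ℕ) (R : Matrix (Fin n) (Fin n) ℝ)
    (hsymm : R.IsSymm) (hR : ∀ i j, R i j ∈ Set.Icc (0:ℝ) 1)
    (β μ : ℝ) (hβ : β ∈ Set.Ioo (0:ℝ) 1) (hμ : μ ∈ Set.Ioo (0:ℝ) 1) :
    (∀ x y : Fin n → ℝ, (∀ i, x i ∈ Set.Icc (0:ℝ) 1) → (∀ i, y i ∈ Set.Icc (0:ℝ) 1) →
      Real.sqrt (∑ i, (F R β μ x i - F R β μ y i) ^ 2)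
        ≤ (1 - μ + β * specRad R) * Real.sqrt (∑ i, (x i - y i) ^ 2)) ∧
    (β < μ / specRad R → 1 - μ + β * specRad R < 1) := by
  refine ⟨fun x y hx hy => ?_, fun hβμ => ?_⟩
  · set v : Fin n → ℝ := fun i => |x i - y i|
    have hF : ∀ i, |F R β μ x i - F R β μ y i| ≤ (1 - μ) * v i + β * (R *ᵥ v) i :=
      abs_F_sub_F_le hR (Set.Ioo_subset_Icc_self hβ) (Set.Ioo_subset_Icc_self hμ) hx hy
    have hv : ‖toLp 2 v‖ = √(∑ i, (x i - y i) ^ 2) := by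
      simp only [← sqrt_sum_sq_eq_norm_toLp, v, sq_abs]
    calc √(∑ i, (F R β μ x i - F R β μ y i) ^ 2)
        ≤ √(∑ i, ((1 - μ) * v i + β * (R *ᵥ v) i) ^ 2) := sqrt_sum_sq_le_of_abs_le hF
      _ = ‖(1 - μ) • toLp 2 v + β • toLp 2 (R *ᵥ v)‖ := sqrt_sum_sq_eq_norm_toLp _
      _ ≤ (1 - μ) * ‖toLp 2 v‖ + β * ‖toLp 2 (R *ᵥ v)‖ := by
        refine (norm_add_le _ _).trans_eq ?_
        rw [norm_smul_of_nonneg (by linarith [hμ.2]), norm_smul_of_nonneg hβ.1.le]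
      _ ≤ (1 - μ) * ‖toLp 2 v‖ + β * (specRad R * ‖toLp 2 v‖) := by
        gcongr
        · exact hβ.1.le
        · exact norm_toLp_mulVec_le_specRad hsymm v
      _ = (1 - μ + β * specRad R) * √(∑ i, (x i - y i) ^ 2) := by rw [← hv]; ring
  · rcases (specRad_nonneg R).eq_or_lt with hzero | hpos
    · rw [← hzero]; linarith [hμ.1]
    · linarith [(lt_div_iff₀ hpos).1 hβμ]

theorem lipschitz_euclidean (n : ℕ) (hn : 2 ≤ n) (R : Matrix (Fin n) (Fin n) ℝ)
    (hsymm : R.IsSymm) (hR : ∀ i j, R i j ∈ Set.Icc (0:ℝ) 1)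
    (hdiag : ∀ i, R i i = 0) (hirr : MatIrred R)
    (β μ : ℝ) (hβ : β ∈ Set.Ioo (0:ℝ) 1) (hμ : μ ∈ Set.Ioo (0:ℝ) 1) :
    (∀ x y : Fin n → ℝ, (∀ i, x i ∈ Set.Icc (0:ℝ) 1) → (∀ i, y i ∈ Set.Icc (0:ℝ) 1) →
      Real.sqrt (∑ i, (F R β μ x i - F R β μ y i) ^ 2)
        ≤ (1 - μ + β * specRad R) * Real.sqrt (∑ i, (x i - y i) ^ 2)) ∧
    (β < μ / specRad R → 1 - μ + β * specRad R < 1) :=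
  lipschitz_euclidean_general n R hsymm hR β μ hβ hμ
end

section
/- The map F is order-preserving on [0,1]^n: if x, y ∈ [0,1]^n and x ⪯ y (componentwise), then F(x) ⪯ F(y). -/
open Filter Finset

theorem F_order_preserving (n : ℕ) (hn : 2 ≤ n) (R : Matrix (Fin n) (Fin n) ℝ)
    (hsymm : R.IsSymm) (hR : ∀ i j, R i j ∈ Set.Icc (0:ℝ) 1)
    (hdiag : ∀ i, R i i = 0) (hirr : MatIrred R)
    (β μ : ℝ) (hβ : β ∈ Set.Ioo (0:ℝ) 1) (hμ : μ ∈ Set.Ioo (0:ℝ) 1)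
    (x y : Fin n → ℝ) (hx : ∀ i, x i ∈ Set.Icc (0:ℝ) 1) (hy : ∀ i, y i ∈ Set.Icc (0:ℝ) 1)
    (hxy : ∀ i, x i ≤ y i) :
    ∀ i, F R β μ x i ≤ F R β μ y i := by
  intro i
  unfold F
  have key : ∀ (z : Fin n → ℝ), (∀ j, z j ∈ Set.Icc (0:ℝ) 1) → ∀ j,
      0 ≤ 1 - β * R i j * z j := by
    intro z hz j
    have h1 : β * R i j * z j ≤ 1 :=
      mul_le_one₀ (mul_le_one₀ hβ.2.le (hR i j).1 (hR i j).2) (hz j).1 (hz j).2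
    linarith
  have hprodx : (1 - (1 - μ) * y i) * ∏ j, (1 - β * R i j * y j)
      ≤ (1 - (1 - μ) * x i) * ∏ j, (1 - β * R i j * x j) := by
    have hprod : ∏ j, (1 - β * R i j * y j) ≤ ∏ j, (1 - β * R i j * x j) := by
      apply Finset.prod_le_prod
      · intro j _; exact key y hy j
      · intro j _
        have : β * R i j * x j ≤ β * R i j * y j := by
          have hb : 0 ≤ β * R i j := mul_nonneg hβ.1.le (hR i j).1
          exact mul_le_mul_of_nonneg_left (hxy j) hb
        linarith
    have hfy : 0 ≤ 1 - (1 - μ) * y i := by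
      nlinarith [hμ.1, hμ.2, (hy i).1, (hy i).2]
    have hfxy : 1 - (1 - μ) * y i ≤ 1 - (1 - μ) * x i := by
      nlinarith [hμ.2, hxy i]
    have hpy : 0 ≤ ∏ j, (1 - β * R i j * y j) :=
      Finset.prod_nonneg fun j _ => key y hy j
    exact mul_le_mul hfxy hprod hpy (by linarith)
  linarith
end

section
/- If x ∈ [0,1]^n and x ≠ 0, then every component of the (n-1)-st iterate F^{n-1}(x) is strictly positive, i.e., F^{n-1}(x) ∈ (0,1]^n. -/
open Filter Finset

section Aux

variable {n : ℕ} (R : Matrix (Fin n) (Fin n) ℝ) (β μ : ℝ)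

lemma factor_bounds (hR : ∀ i j, R i j ∈ Set.Icc (0:ℝ) 1)
    (hβ : β ∈ Set.Ioo (0:ℝ) 1) (y : Fin n → ℝ) (hy : ∀ i, y i ∈ Set.Icc (0:ℝ) 1)
    (i j : Fin n) : 0 < 1 - β * R i j * y j ∧ 1 - β * R i j * y j ≤ 1 := by
  have h1 : 0 ≤ β * R i j * y j :=
    mul_nonneg (mul_nonneg hβ.1.le (hR i j).1) (hy j).1
  have h2 : β * R i j * y j < 1 := by
    have e1 : β * R i j * y j ≤ β * R i j * 1 :=
      mul_le_mul_of_nonneg_left (hy j).2 (mul_nonneg hβ.1.le (hR i j).1)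
    have e2 : β * R i j ≤ β * 1 := mul_le_mul_of_nonneg_left (hR i j).2 hβ.1.le
    have := hβ.2
    linarith
  constructor <;> linarith

lemma prod_bounds (hR : ∀ i j, R i j ∈ Set.Icc (0:ℝ) 1)
    (hβ : β ∈ Set.Ioo (0:ℝ) 1) (y : Fin n → ℝ) (hy : ∀ i, y i ∈ Set.Icc (0:ℝ) 1)
    (i : Fin n) : 0 < ∏ j, (1 - β * R i j * y j) ∧ (∏ j, (1 - β * R i j * y j)) ≤ 1 := by
  constructor
  · exact Finset.prod_pos fun j _ => (factor_bounds R β hR hβ y hy i j).1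
  · exact Finset.prod_le_one (fun j _ => (factor_bounds R β hR hβ y hy i j).1.le)
      (fun j _ => (factor_bounds R β hR hβ y hy i j).2)

lemma A_bounds (hμ : μ ∈ Set.Ioo (0:ℝ) 1) (y : Fin n → ℝ)
    (hy : ∀ i, y i ∈ Set.Icc (0:ℝ) 1) (i : Fin n) :
    0 < 1 - (1 - μ) * y i ∧ 1 - (1 - μ) * y i ≤ 1 := by
  have h1 : 0 ≤ (1 - μ) * y i := mul_nonneg (by linarith [hμ.2]) (hy i).1
  have h2 : (1 - μ) * y i < 1 := by
    have : (1 - μ) * y i ≤ (1 - μ) * 1 := by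
      apply mul_le_mul_of_nonneg_left (hy i).2; linarith [hμ.2]
    linarith [hμ.1]
  constructor <;> linarith

lemma F_mem (hR : ∀ i j, R i j ∈ Set.Icc (0:ℝ) 1)
    (hβ : β ∈ Set.Ioo (0:ℝ) 1) (hμ : μ ∈ Set.Ioo (0:ℝ) 1)
    (y : Fin n → ℝ) (hy : ∀ i, y i ∈ Set.Icc (0:ℝ) 1) (i : Fin n) :
    F R β μ y i ∈ Set.Icc (0:ℝ) 1 := by
  have hA := A_bounds μ hμ y hy i
  have hP := prod_bounds R β hR hβ y hy i
  have h1 : 0 < (1 - (1 - μ) * y i) * ∏ j, (1 - β * R i j * y j) :=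
    mul_pos hA.1 hP.1
  have h2 : (1 - (1 - μ) * y i) * ∏ j, (1 - β * R i j * y j) ≤ 1 :=
    mul_le_one₀ hA.2 hP.1.le hP.2
  simp only [F, Set.mem_Icc]
  constructor <;> linarith

lemma F_pos (hR : ∀ i j, R i j ∈ Set.Icc (0:ℝ) 1)
    (hβ : β ∈ Set.Ioo (0:ℝ) 1) (hμ : μ ∈ Set.Ioo (0:ℝ) 1)
    (y : Fin n → ℝ) (hy : ∀ i, y i ∈ Set.Icc (0:ℝ) 1) (i : Fin n)
    (h : 0 < y i ∨ ∃ j, R i j ≠ 0 ∧ 0 < y j) : 0 < F R β μ y i := by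
  have hA := A_bounds μ hμ y hy i
  have hP := prod_bounds R β hR hβ y hy i
  have key : (1 - (1 - μ) * y i) * ∏ j, (1 - β * R i j * y j) < 1 := by
    rcases h with h | ⟨j, hRij, hyj⟩
    · have hA1 : 1 - (1 - μ) * y i < 1 := by
        have : 0 < (1 - μ) * y i := mul_pos (by linarith [hμ.2]) h
        linarith
      calc (1 - (1 - μ) * y i) * ∏ j, (1 - β * R i j * y j)
          ≤ (1 - (1 - μ) * y i) * 1 := mul_le_mul_of_nonneg_left hP.2 hA.1.le
        _ < 1 := by linarith
    · have hfj : 1 - β * R i j * y j < 1 := by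
        have : 0 < β * R i j * y j :=
          mul_pos (mul_pos hβ.1 (lt_of_le_of_ne (hR i j).1 (Ne.symm hRij))) hyj
        linarith
      have hPj : (∏ k, (1 - β * R i k * y k)) ≤ 1 - β * R i j * y j := by
        rw [← Finset.mul_prod_erase Finset.univ _ (Finset.mem_univ j)]
        have h1 : (∏ k ∈ Finset.univ.erase j, (1 - β * R i k * y k)) ≤ 1 :=
          Finset.prod_le_one (fun k _ => (factor_bounds R β hR hβ y hy i k).1.le)
            (fun k _ => (factor_bounds R β hR hβ y hy i k).2)
        calc (1 - β * R i j * y j) * ∏ k ∈ Finset.univ.erase j, (1 - β * R i k * y k)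
            ≤ (1 - β * R i j * y j) * 1 :=
              mul_le_mul_of_nonneg_left h1 (factor_bounds R β hR hβ y hy i j).1.le
          _ = 1 - β * R i j * y j := mul_one _
      calc (1 - (1 - μ) * y i) * ∏ k, (1 - β * R i k * y k)
          ≤ 1 * ∏ k, (1 - β * R i k * y k) :=
            mul_le_mul_of_nonneg_right hA.2 hP.1.le
        _ = ∏ k, (1 - β * R i k * y k) := one_mul _
        _ ≤ 1 - β * R i j * y j := hPj
        _ < 1 := hfj
  simp only [F]; linarith

lemma power_zero_of_no_edge (S : Finset (Fin n))
    (hno : ∀ a ∉ S, ∀ b ∈ S, R a b = 0) :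
    ∀ k : ℕ, ∀ a ∉ S, ∀ b ∈ S, (R ^ k) a b = 0 := by
  intro k
  induction k with
  | zero =>
    intro a ha b hb
    have hab : a ≠ b := fun h => ha (h ▸ hb)
    simp [Matrix.one_apply, hab]
  | succ m ih =>
    intro a ha b hb
    rw [pow_succ', Matrix.mul_apply]
    apply Finset.sum_eq_zero
    intro c _
    by_cases hc : c ∈ S
    · rw [hno a ha c hc, zero_mul]
    · rw [ih c hc b hb, mul_zero]

lemma exists_edge (hirr : MatIrred R) (S : Finset (Fin n))
    (hS : S.Nonempty) (hSne : S ≠ Finset.univ) :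
    ∃ a ∉ S, ∃ b ∈ S, R a b ≠ 0 := by
  by_contra hno
  push_neg at hno
  obtain ⟨b, hb⟩ := hS
  obtain ⟨a, ha⟩ : ∃ a, a ∉ S := by
    by_contra h; push_neg at h
    exact hSne (Finset.eq_univ_iff_forall.2 h)
  obtain ⟨k, _, hk⟩ := hirr a b
  exact hk (power_zero_of_no_edge R S hno k a ha b hb)

end Aux

theorem iterate_positive (n : ℕ) (hn : 2 ≤ n) (R : Matrix (Fin n) (Fin n) ℝ)
    (hsymm : R.IsSymm) (hR : ∀ i j, R i j ∈ Set.Icc (0:ℝ) 1)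
    (hdiag : ∀ i, R i i = 0) (hirr : MatIrred R)
    (β μ : ℝ) (hβ : β ∈ Set.Ioo (0:ℝ) 1) (hμ : μ ∈ Set.Ioo (0:ℝ) 1)
    (x : Fin n → ℝ) (hx : ∀ i, x i ∈ Set.Icc (0:ℝ) 1) (hx0 : x ≠ 0) :
    ∀ i, 0 < (F R β μ)^[n - 1] x i ∧ (F R β μ)^[n - 1] x i ≤ 1 := by
  set y : ℕ → Fin n → ℝ := fun k => (F R β μ)^[k] x with hy
  have hbounds : ∀ k i, y k i ∈ Set.Icc (0:ℝ) 1 := by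
    intro k
    induction k with
    | zero => exact hx
    | succ m ih =>
      intro i
      have : y (m + 1) = F R β μ (y m) := by
        simp [hy, Function.iterate_succ_apply']
      rw [this]
      exact F_mem R β μ hR hβ hμ (y m) ih i
  set S : ℕ → Finset (Fin n) := fun k => Finset.univ.filter (fun i => 0 < y k i) with hS
  have hstep : ∀ k, y (k + 1) = F R β μ (y k) := by
    intro k; simp [hy, Function.iterate_succ_apply']
  have hmono : ∀ k, S k ⊆ S (k + 1) := by
    intro k i hi
    simp only [hS, Finset.mem_filter, Finset.mem_univ, true_and] at hi ⊢
    rw [hstep k]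
    exact F_pos R β μ hR hβ hμ (y k) (hbounds k) i (Or.inl hi)
  have hcard : ∀ k, min n (k + 1) ≤ (S k).card := by
    intro k
    induction k with
    | zero =>
      obtain ⟨i, hi⟩ : ∃ i, x i ≠ 0 := by
        by_contra h; push_neg at h
        exact hx0 (funext h)
      have hipos : 0 < y 0 i := lt_of_le_of_ne (hx i).1 (Ne.symm hi)
      have : i ∈ S 0 := by simp [hS, hipos]
      have h1 : 1 ≤ (S 0).card := Finset.card_pos.2 ⟨i, this⟩
      omega
    | succ m ih =>
      by_cases hfull : S m = Finset.univ
      · have hsub : Finset.univ ⊆ S (m + 1) := hfull ▸ hmono m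
        have h1 : n ≤ (S (m + 1)).card := by
          have := Finset.card_le_card hsub
          simpa using this
        omega
      · obtain ⟨a, ha, b, hb, hab⟩ := exists_edge R hirr (S m)
          (Finset.card_pos.1 (by omega)) hfull
        have hbpos : 0 < y m b := by
          simpa [hS] using hb
        have hanew : a ∈ S (m + 1) := by
          simp only [hS, Finset.mem_filter, Finset.mem_univ, true_and]
          rw [hstep m]
          exact F_pos R β μ hR hβ hμ (y m) (hbounds m) a (Or.inr ⟨b, hab, hbpos⟩)
        have hsub : insert a (S m) ⊆ S (m + 1) := by
          intro i hi
          rcases Finset.mem_insert.1 hi with rfl | hi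
          · exact hanew
          · exact hmono m hi
        have h1 : (S m).card + 1 ≤ (S (m + 1)).card := by
          have := Finset.card_le_card hsub
          rwa [Finset.card_insert_of_notMem ha] at this
        omega
  intro i
  have hcardn : n ≤ (S (n - 1)).card := by
    have hall := hcard (n - 1)
    omega
  have huniv : S (n - 1) = Finset.univ := by
    apply Finset.eq_univ_of_card
    have hle := Finset.card_le_card (Finset.subset_univ (S (n - 1)))
    simp only [Finset.card_univ, Fintype.card_fin] at hle ⊢
    omega
  have hi : i ∈ S (n - 1) := huniv ▸ Finset.mem_univ i
  have hipos : 0 < y (n - 1) i := by simpa [hS] using hi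
  exact ⟨hipos, (hbounds (n - 1) i).2⟩
end

section
/- Assume β > β₀, and let v ∈ ℝ^n be a nonzero vector with nonnegative entries satisfying R·v = ρ(R)·v. Then there exists ε₀ > 0 such that for every ε ∈ (0, ε₀], F(ε·v) ⪰ ε·v componentwise. -/
open Filter Finset

lemma prod_one_sub_le {ι : Type*} (s : Finset ι) (b : ι → ℝ)
    (h0 : ∀ j ∈ s, 0 ≤ b j) (h1 : ∀ j ∈ s, b j ≤ 1) :
    ∏ j ∈ s, (1 - b j) ≤ 1 - (∑ j ∈ s, b j) + (∑ j ∈ s, b j) ^ 2 / 2 := by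
  induction s using Finset.cons_induction with
  | empty => simp
  | cons a s ha ih =>
    rw [Finset.prod_cons, Finset.sum_cons]
    have hb0 : 0 ≤ b a := h0 a (Finset.mem_cons_self a s)
    have hb1 : b a ≤ 1 := h1 a (Finset.mem_cons_self a s)
    have hS0 : 0 ≤ ∑ j ∈ s, b j :=
      Finset.sum_nonneg fun j hj => h0 j (Finset.mem_cons_of_mem hj)
    have ihs := ih (fun j hj => h0 j (Finset.mem_cons_of_mem hj))
      (fun j hj => h1 j (Finset.mem_cons_of_mem hj))
    nlinarith [mul_le_mul_of_nonneg_left ihs (by linarith : (0:ℝ) ≤ 1 - b a),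
      sq_nonneg (∑ j ∈ s, b j), mul_nonneg (mul_nonneg hb0 hb0) hS0,
      mul_nonneg hb0 (sq_nonneg (∑ j ∈ s, b j))]

set_option maxHeartbeats 1000000 in
theorem supersolution_near_origin (n : ℕ) (hn : 2 ≤ n) (R : Matrix (Fin n) (Fin n) ℝ)
    (hsymm : R.IsSymm) (hR : ∀ i j, R i j ∈ Set.Icc (0:ℝ) 1)
    (hdiag : ∀ i, R i i = 0) (hirr : MatIrred R)
    (β μ : ℝ) (hβ : β ∈ Set.Ioo (0:ℝ) 1) (hμ : μ ∈ Set.Ioo (0:ℝ) 1)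
    (hgt : μ / specRad R < β)
    (v : Fin n → ℝ) (hv0 : v ≠ 0) (hvpos : ∀ i, 0 ≤ v i)
    (hev : R.mulVec v = specRad R • v) :
    ∃ ε₀ > (0:ℝ), ∀ ε : ℝ, 0 < ε → ε ≤ ε₀ →
      ∀ i, ε * v i ≤ F R β μ (ε • v) i := by
  set ρ := specRad R with hρ
  -- entries of powers are nonnegative
  have hpow : ∀ k : ℕ, ∀ i j, 0 ≤ (R ^ k) i j := by
    intro k
    induction k with
    | zero =>
      intro i j
      simp [Matrix.one_apply]
      positivity
    | succ k ih =>
      intro i j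
      rw [pow_succ]
      have : (R ^ k * R) i j = ∑ l, (R ^ k) i l * R l j := rfl
      rw [this]
      exact Finset.sum_nonneg fun l _ => mul_nonneg (ih i l) (hR l j).1
  -- powers eigenvector equation
  have hpowev : ∀ k : ℕ, (R ^ k).mulVec v = ρ ^ k • v := by
    intro k
    induction k with
    | zero => simp
    | succ k ih =>
      rw [pow_succ', pow_succ']
      rw [← Matrix.mulVec_mulVec, ih, Matrix.mulVec_smul, hev, smul_smul, mul_comm]
  -- some index with positive entry
  obtain ⟨j₀, hj₀⟩ : ∃ j, 0 < v j := by
    by_contra h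
    push_neg at h
    exact hv0 (funext fun j => le_antisymm (h j) (hvpos j))
  -- v is strictly positive and ρ > 0
  have key : ∀ i, 0 < v i ∧ 0 < ρ := by
    intro i
    obtain ⟨k, hk, hkij⟩ := hirr i j₀
    have hkpos : 0 < (R ^ k) i j₀ := lt_of_le_of_ne (hpow k i j₀) (Ne.symm hkij)
    have h1 : ((R ^ k).mulVec v) i = ∑ j, (R ^ k) i j * v j := rfl
    have h2 : ((R ^ k).mulVec v) i = ρ ^ k * v i := by
      rw [hpowev k]; simp
    have h3 : (R ^ k) i j₀ * v j₀ ≤ ∑ j, (R ^ k) i j * v j := by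
      apply Finset.single_le_sum (f := fun j => (R ^ k) i j * v j)
        (fun j _ => mul_nonneg (hpow k i j) (hvpos j)) (Finset.mem_univ j₀)
    have h4 : 0 < ρ ^ k * v i := by
      rw [← h2, h1]
      exact lt_of_lt_of_le (mul_pos hkpos hj₀) h3
    have hvi : 0 < v i := by
      rcases (hvpos i).lt_or_eq with h | h
      · exact h
      · exfalso; rw [← h] at h4; simp at h4
    refine ⟨hvi, ?_⟩
    have hρk : 0 < ρ ^ k := by
      rcases mul_pos_iff.mp h4 with ⟨h, _⟩ | ⟨_, h⟩
      · exact h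
      · linarith
    -- ρ ≥ 0
    have hρ0 : 0 ≤ ρ := by
      have e1 : (R.mulVec v) j₀ = ∑ j, R j₀ j * v j := rfl
      have e2 : (R.mulVec v) j₀ = ρ * v j₀ := by rw [hev]; simp
      have e3 : 0 ≤ ∑ j, R j₀ j * v j :=
        Finset.sum_nonneg fun j _ => mul_nonneg (hR j₀ j).1 (hvpos j)
      nlinarith [e3, hj₀, e2.symm.trans e1]
    rcases hρ0.lt_or_eq with h | h
    · exact h
    · exfalso
      rw [← h, zero_pow hk.ne'] at hρk
      exact lt_irrefl 0 hρk
  have hρpos : 0 < ρ := (key j₀).2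
  have hvp : ∀ i, 0 < v i := fun i => (key i).1
  have hμρ : μ < β * ρ := by
    rw [div_lt_iff₀ hρpos] at hgt
    linarith
  -- constants
  haveI : Nonempty (Fin n) := ⟨j₀⟩
  set M := Finset.univ.sup' Finset.univ_nonempty v with hM
  have hMv : ∀ i, v i ≤ M := fun i => Finset.le_sup' v (Finset.mem_univ i)
  have hMpos : 0 < M := lt_of_lt_of_le (hvp j₀) (hMv j₀)
  set δ := β * ρ - μ with hδ
  have hδpos : 0 < δ := by simp [hδ]; linarith
  set K := β * ρ * (1 - μ) + (β * ρ) ^ 2 / 2 with hK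
  have hKpos : 0 < K := by
    have : 0 < β * ρ := mul_pos hβ.1 hρpos
    have : 0 < 1 - μ := by linarith [hμ.2]
    positivity
  refine ⟨min (1 / M) (δ / (K * M)), lt_min (by positivity) (by positivity), ?_⟩
  intro ε hε hεle i
  set t := ε * v i with ht
  have htpos : 0 < t := mul_pos hε (hvp i)
  have htle : ∀ j, ε * v j ≤ ε * M := fun j =>
    mul_le_mul_of_nonneg_left (hMv j) hε.le
  have hεM1 : ε * M ≤ 1 := by
    have h1 : ε ≤ 1 / M := le_trans hεle (min_le_left _ _)
    rw [le_div_iff₀ hMpos] at h1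
    linarith
  have hεMδ : ε * M ≤ δ / K := by
    have h1 : ε ≤ δ / (K * M) := le_trans hεle (min_le_right _ _)
    rw [le_div_iff₀ (by positivity)] at h1
    rw [le_div_iff₀ hKpos]
    nlinarith
  have htδ : t * K ≤ δ := by
    have : t ≤ δ / K := le_trans (le_trans (htle i) hεMδ) le_rfl
    rw [le_div_iff₀ hKpos] at this
    linarith
  have ht1 : t ≤ 1 := le_trans (htle i) hεM1
  -- the product bound
  have hb0 : ∀ j ∈ (Finset.univ : Finset (Fin n)), 0 ≤ β * R i j * (ε * v j) := fun j _ =>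
    mul_nonneg (mul_nonneg hβ.1.le (hR i j).1) (mul_nonneg hε.le (hvpos j))
  have hb1 : ∀ j ∈ (Finset.univ : Finset (Fin n)), β * R i j * (ε * v j) ≤ 1 := by
    intro j _
    have h1 : β * R i j ≤ 1 :=
      le_trans (mul_le_mul hβ.2.le (hR i j).2 (hR i j).1 zero_le_one) (by norm_num)
    have h2 : ε * v j ≤ 1 := le_trans (htle j) hεM1
    have h3 : 0 ≤ ε * v j := mul_nonneg hε.le (hvpos j)
    nlinarith [mul_nonneg hβ.1.le (hR i j).1]
  have hSval : ∑ j, β * R i j * (ε * v j) = β * ρ * t := by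
    have e1 : (R.mulVec v) i = ∑ j, R i j * v j := rfl
    have e2 : (R.mulVec v) i = ρ * v i := by rw [hev]; simp
    have e3 : ∑ j, β * R i j * (ε * v j) = β * ε * ∑ j, R i j * v j := by
      rw [Finset.mul_sum]
      exact Finset.sum_congr rfl fun j _ => by ring
    rw [e3, ← e1, e2, ht]
    ring
  have hprod := prod_one_sub_le Finset.univ (fun j => β * R i j * (ε * v j)) hb0 hb1
  rw [hSval] at hprod
  -- assemble
  have hgoal : F R β μ (ε • v) i =
      1 - (1 - (1 - μ) * (ε * v i)) * ∏ j, (1 - β * R i j * (ε * v j)) := by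
    simp [F, Pi.smul_apply, smul_eq_mul]
  rw [hgoal]
  clear_value ρ M δ K t
  have ha : (0:ℝ) ≤ 1 - (1 - μ) * t := by
    nlinarith [hμ.1]
  have step : (1 - (1 - μ) * t) * ∏ j, (1 - β * R i j * (ε * v j)) ≤
      (1 - (1 - μ) * t) * (1 - β * ρ * t + (β * ρ * t) ^ 2 / 2) :=
    mul_le_mul_of_nonneg_left hprod ha
  have final : (1 - (1 - μ) * t) * (1 - β * ρ * t + (β * ρ * t) ^ 2 / 2) ≤ 1 - t := by
    have expand : 1 - t - (1 - (1 - μ) * t) * (1 - β * ρ * t + (β * ρ * t) ^ 2 / 2) =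
        t * (δ - t * K) + (1 - μ) * (β * ρ) ^ 2 * t ^ 3 / 2 := by
      rw [hδ, hK]; ring
    have h1 : 0 ≤ t * (δ - t * K) :=
      mul_nonneg htpos.le (by linarith)
    have h2 : 0 ≤ (1 - μ) * (β * ρ) ^ 2 * t ^ 3 / 2 := by
      have : (0:ℝ) ≤ 1 - μ := by linarith [hμ.2]
      positivity
    nlinarith [expand, h1, h2]
  rw [ht] at step final ⊢
  linarith [step, final]
end

section
/- If β > β₀, then F has a fixed point z₀ in the interior of the hypercube, i.e., there exists z₀ ∈ (0,1)^n (all components strictly between 0 and 1) with F(z₀) = z₀. -/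
open Filter Finset

/-!
Perron–Frobenius for the symmetric nonnegative matrix `R`: maximising the quadratic form
`x ⬝ᵥ R *ᵥ x` on the unit sphere and replacing a maximiser by its absolute value gives a
nonnegative eigenvector `v` whose eigenvalue `r` dominates the quadratic form, hence every real
eigenvalue in absolute value, so `specRad R = r`; irreducibility makes `r` and `v` positive.

Since `∏ (1 - aⱼ) ≤ 1 / (1 + ∑ aⱼ)`, the hypothesis `μ < β r` makes `ε • v` a subsolution,
`ε • v ≤ F (ε • v)`, for small `ε > 0`. `F` is monotone on the cube and `F 1 ≤ 1`, so Tarski's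
fixed point theorem on the complete lattice `[ε • v, 1]` gives a fixed point `z ≥ ε • v > 0`,
and `z = F z < 1` because `μ > 0` and `β < 1`.
-/

open Matrix Set WithLp Topology

section PerronFrobenius

variable {ι : Type*} [Fintype ι] {R : Matrix ι ι ℝ}

theorem Matrix.abs_dotProduct_mulVec_le (hR0 : ∀ i j, 0 ≤ R i j) (x : ι → ℝ) :
    |x ⬝ᵥ R *ᵥ x| ≤ |x| ⬝ᵥ R *ᵥ |x| := by
  simp only [dotProduct, mulVec, Finset.mul_sum, Pi.abs_apply]
  refine (abs_sum_le_sum_abs _ _).trans (sum_le_sum fun i _ => ?_)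
  refine (abs_sum_le_sum_abs _ _).trans_eq (sum_congr rfl fun j _ => ?_)
  rw [abs_mul, abs_mul, abs_of_nonneg (hR0 i j)]

theorem Matrix.mem_spectrum_iff_exists_mulVec_eq_smul {K : Type*} [Field K] [DecidableEq ι]
    {A : Matrix ι ι K} {z : K} : z ∈ spectrum K A ↔ ∃ v ≠ 0, A *ᵥ v = z • v := by
  rw [← spectrum_toLin', ← Module.End.hasEigenvalue_iff_mem_spectrum,
    Module.End.hasEigenvalue_iff, Submodule.ne_bot_iff]
  simp only [Module.End.mem_eigenspace_iff, toLin'_apply]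
  exact ⟨fun ⟨v, hv, h⟩ => ⟨v, h, hv⟩, fun ⟨v, h, hv⟩ => ⟨v, hv, h⟩⟩

theorem EuclideanSpace.real_norm_sq_eq_dotProduct (x : EuclideanSpace ℝ ι) :
    ‖x‖ ^ 2 = ofLp x ⬝ᵥ ofLp x := by
  rw [EuclideanSpace.real_norm_sq_eq]
  simp [dotProduct, sq]

theorem Matrix.reApplyInnerSelf_toEuclideanCLM [DecidableEq ι] (x : EuclideanSpace ℝ ι) :
    (toEuclideanCLM (𝕜 := ℝ) R).reApplyInnerSelf x = ofLp x ⬝ᵥ R *ᵥ ofLp x := by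
  rw [ContinuousLinearMap.reApplyInnerSelf_apply, RCLike.re_to_real, real_inner_comm,
    inner_toEuclideanCLM]

theorem Matrix.IsSymm.exists_nonneg_eigenvector [DecidableEq ι] [Nonempty ι] (hR : R.IsSymm)
    (hR0 : ∀ i j, 0 ≤ R i j) :
    ∃ (r : ℝ) (v : ι → ℝ), 0 ≤ v ∧ v ≠ 0 ∧ R *ᵥ v = r • v ∧
      ∀ x, x ⬝ᵥ R *ᵥ x ≤ r * (x ⬝ᵥ x) := by
  set T := toEuclideanCLM (𝕜 := ℝ) R
  have hT : IsSelfAdjoint T := by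
    rw [ContinuousLinearMap.isSelfAdjoint_iff_isSymmetric]
    exact isSymmetric_toEuclideanLin_iff.mpr hR
  obtain ⟨y, hy, hymax⟩ := (isCompact_sphere (0 : EuclideanSpace ℝ ι) 1).exists_isMaxOn
    (NormedSpace.sphere_nonempty.2 zero_le_one) T.reApplyInnerSelf_continuous.continuousOn
  rw [mem_sphere_zero_iff_norm] at hy
  set v : EuclideanSpace ℝ ι := toLp 2 |ofLp y|
  have hv : ‖v‖ = 1 := by
    rw [← hy, ← sq_eq_sq₀ (norm_nonneg _) (norm_nonneg _),
      EuclideanSpace.real_norm_sq_eq_dotProduct, EuclideanSpace.real_norm_sq_eq_dotProduct]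
    simp [v, dotProduct, abs_mul_abs_self]
  have hvmax : IsMaxOn T.reApplyInnerSelf (Metric.sphere 0 ‖v‖) v := fun x hx =>
    calc T.reApplyInnerSelf x ≤ T.reApplyInnerSelf y := hymax (by rwa [hv] at hx)
      _ ≤ |ofLp y ⬝ᵥ R *ᵥ ofLp y| :=
        (reApplyInnerSelf_toEuclideanCLM y).trans_le (le_abs_self _)
      _ ≤ T.reApplyInnerSelf v :=
        (abs_dotProduct_mulVec_le hR0 _).trans_eq (reApplyInnerSelf_toEuclideanCLM v).symm
  have hv0 : v ≠ 0 := norm_ne_zero_iff.mp (hv ▸ one_ne_zero)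
  have hvec := hT.hasEigenvector_of_isMaxOn hv0 hvmax
  refine ⟨_, ofLp v, fun i => abs_nonneg _, fun h => hv0 (congrArg (toLp 2) h),
    congrArg ofLp hvec.apply_eq_smul, fun x => ?_⟩
  rcases eq_or_ne x 0 with rfl | hx
  · simp
  have hbdd : BddAbove (range fun x : {x : EuclideanSpace ℝ ι // x ≠ 0} =>
      T.rayleighQuotient x) :=
    ⟨‖T‖, by rintro _ ⟨x, rfl⟩; exact (le_abs_self _).trans (T.rayleighQuotient_le_norm x)⟩
  have hx' : toLp 2 x ≠ 0 := fun h => hx (congrArg ofLp h)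
  have := le_ciSup hbdd ⟨toLp 2 x, hx'⟩
  rwa [ContinuousLinearMap.rayleighQuotient, div_le_iff₀ (pow_pos (norm_pos_iff.2 hx') 2),
    reApplyInnerSelf_toEuclideanCLM, EuclideanSpace.real_norm_sq_eq_dotProduct] at this

theorem Matrix.abs_le_of_mem_spectrum [DecidableEq ι] (hR0 : ∀ i j, 0 ≤ R i j) {r : ℝ}
    (hr : ∀ x, x ⬝ᵥ R *ᵥ x ≤ r * (x ⬝ᵥ x)) {z : ℝ} (hz : z ∈ spectrum ℝ R) :
    |z| ≤ r := by
  obtain ⟨w, hw, hRw⟩ := mem_spectrum_iff_exists_mulVec_eq_smul.mp hz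
  have hww : 0 < w ⬝ᵥ w :=
    (sum_nonneg fun i _ => mul_self_nonneg (w i)).lt_of_ne' (dotProduct_self_eq_zero.not.2 hw)
  refine le_of_mul_le_mul_right ?_ hww
  calc |z| * (w ⬝ᵥ w) = |w ⬝ᵥ R *ᵥ w| := by
        rw [hRw, dotProduct_smul, smul_eq_mul, abs_mul, abs_of_pos hww]
    _ ≤ |w| ⬝ᵥ R *ᵥ |w| := abs_dotProduct_mulVec_le hR0 w
    _ ≤ r * (|w| ⬝ᵥ |w|) := hr _
    _ = r * (w ⬝ᵥ w) := by simp only [dotProduct, Pi.abs_apply, abs_mul_abs_self]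

end PerronFrobenius

section SpectralRadius

variable {n : ℕ} {R : Matrix (Fin n) (Fin n) ℝ} {r : ℝ} {v : Fin n → ℝ}

theorem specRad_eq_of_mulVec_eq_smul (hR0 : ∀ i j, 0 ≤ R i j) (hv : v ≠ 0)
    (hRv : R *ᵥ v = r • v) (hr : ∀ x, x ⬝ᵥ R *ᵥ x ≤ r * (x ⬝ᵥ x)) : specRad R = r := by
  have habs : ∀ z ∈ spectrum ℝ R, |z| ≤ r := fun _ => abs_le_of_mem_spectrum hR0 hr
  have hmem : r ∈ spectrum ℝ R := mem_spectrum_iff_exists_mulVec_eq_smul.mpr ⟨v, hv, hRv⟩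
  refine IsGreatest.csSup_eq
    ⟨⟨r, hmem, abs_of_nonneg ((abs_nonneg r).trans (habs r hmem))⟩, ?_⟩
  rintro _ ⟨z, hz, rfl⟩
  exact habs z hz

theorem MatIrred.pos_of_mulVec_eq_smul (hirr : MatIrred R) (hR0 : ∀ i j, 0 ≤ R i j)
    (hv0 : 0 ≤ v) (hv : v ≠ 0) (hRv : R *ᵥ v = r • v) : 0 < r ∧ ∀ i, 0 < v i := by
  obtain ⟨i₀, hi₀⟩ : ∃ i, 0 < v i := by
    by_contra! h
    exact hv (funext fun i => le_antisymm (h i) (hv0 i))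
  have hr : 0 ≤ r := by
    have : 0 ≤ (R *ᵥ v) i₀ := by
      simp only [mulVec, dotProduct]
      exact sum_nonneg fun j _ => mul_nonneg (hR0 i₀ j) (hv0 j)
    rw [hRv, Pi.smul_apply, smul_eq_mul] at this
    exact nonneg_of_mul_nonneg_left this hi₀
  have hpow (k : ℕ) : R ^ k *ᵥ v = r ^ k • v := by
    induction k with
    | zero => simp
    | succ k ih => rw [pow_succ', ← mulVec_mulVec, ih, mulVec_smul, hRv, smul_smul, pow_succ]
  have hreach (i : Fin n) : ∃ k, 0 < k ∧ 0 < r ^ k * v i := by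
    obtain ⟨k, hk, hne⟩ := hirr i i₀
    refine ⟨k, hk, ?_⟩
    calc 0 < (R ^ k) i i₀ * v i₀ :=
          mul_pos ((pow_apply_nonneg hR0 k i i₀).lt_of_ne hne.symm) hi₀
      _ ≤ (R ^ k *ᵥ v) i := single_le_sum (f := fun j => (R ^ k) i j * v j)
          (fun j _ => mul_nonneg (pow_apply_nonneg hR0 k i j) (hv0 j)) (mem_univ i₀)
      _ = r ^ k * v i := by rw [hpow]; rfl
  refine ⟨?_, fun i => ?_⟩
  · obtain ⟨k, hk, h⟩ := hreach i₀
    exact hr.lt_of_ne fun h0 => by simp [← h0, zero_pow hk.ne'] at h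
  · obtain ⟨k, -, h⟩ := hreach i
    exact pos_of_mul_pos_right h (pow_nonneg hr k)

end SpectralRadius

theorem Finset.one_add_sum_le_prod_one_add {ι R : Type*} [CommSemiring R] [PartialOrder R]
    [IsOrderedRing R] (s : Finset ι) {a : ι → R} (ha : ∀ j ∈ s, 0 ≤ a j) :
    1 + ∑ j ∈ s, a j ≤ ∏ j ∈ s, (1 + a j) := by
  induction s using Finset.cons_induction with
  | empty => simp
  | cons j s hj ih =>
    rw [forall_mem_cons] at ha
    rw [sum_cons, prod_cons]
    calc 1 + (a j + ∑ i ∈ s, a i) ≤ 1 + (a j + ∑ i ∈ s, a i) + a j * ∑ i ∈ s, a i :=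
          le_add_of_nonneg_right (mul_nonneg ha.1 (sum_nonneg ha.2))
      _ = (1 + a j) * (1 + ∑ i ∈ s, a i) := by ring
      _ ≤ (1 + a j) * ∏ i ∈ s, (1 + a i) :=
          mul_le_mul_of_nonneg_left (ih ha.2) (add_nonneg zero_le_one ha.1)

theorem Finset.prod_one_sub_mul_one_add_sum_le_one {ι : Type*} (s : Finset ι) {a : ι → ℝ}
    (ha : ∀ j ∈ s, a j ∈ unitInterval) :
    (∏ j ∈ s, (1 - a j)) * (1 + ∑ j ∈ s, a j) ≤ 1 :=
  calc (∏ j ∈ s, (1 - a j)) * (1 + ∑ j ∈ s, a j)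
      ≤ (∏ j ∈ s, (1 - a j)) * ∏ j ∈ s, (1 + a j) :=
        mul_le_mul_of_nonneg_left (one_add_sum_le_prod_one_add s fun j hj => (ha j hj).1)
          (prod_nonneg fun j hj => sub_nonneg.2 (ha j hj).2)
    _ = ∏ j ∈ s, (1 - a j ^ 2) := by rw [← prod_mul_distrib]; congr! 1 with j; ring
    _ ≤ 1 := prod_le_one (fun j hj => sub_nonneg.2 (pow_le_one₀ (ha j hj).1 (ha j hj).2))
      fun j _ => sub_le_self _ (sq_nonneg _)

theorem MonotoneOn.exists_isFixedPt_mem_Icc {α : Type*} [ConditionallyCompleteLattice α]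
    {f : α → α} {a b : α} (hf : MonotoneOn f (Icc a b)) (hab : a ≤ b) (ha : a ≤ f a)
    (hb : f b ≤ b) : ∃ z ∈ Icc a b, Function.IsFixedPt f z := by
  have : Fact (a ≤ b) := ⟨hab⟩
  have hmaps : MapsTo f (Icc a b) (Icc a b) := fun y hy =>
    ⟨ha.trans (hf (left_mem_Icc.2 hab) hy hy.1), (hf hy (right_mem_Icc.2 hab) hy.2).trans hb⟩
  let g : Icc a b →o Icc a b := ⟨hmaps.restrict, fun y z h => hf y.2 z.2 h⟩
  exact ⟨g.lfp, g.lfp.2, congrArg Subtype.val g.map_lfp⟩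

theorem exists_pos_mul_le {ι : Type*} [Finite ι] (v : ι → ℝ) {c : ℝ} (hc : 0 < c) :
    ∃ ε > 0, ∀ i, ε * v i ≤ c := by
  have hsmall : ∀ᶠ ε in 𝓝[>] (0 : ℝ), ∀ i, ε * v i < c := eventually_all.2 fun i =>
    nhdsWithin_le_nhds <| ((continuous_mul_const (v i)).tendsto' 0 0 (zero_mul _)).eventually
      (gt_mem_nhds hc)
  obtain ⟨ε, hεv, hε⟩ := (hsmall.and self_mem_nhdsWithin).exists
  exact ⟨ε, hε, fun i => (hεv i).le⟩

section MMCA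

variable {n : ℕ} {R : Matrix (Fin n) (Fin n) ℝ} {β μ : ℝ} {x : Fin n → ℝ}

theorem F_monotoneOn (hR : ∀ i j, R i j ∈ unitInterval) (hβ : β ∈ unitInterval)
    (hμ : μ ∈ unitInterval) : MonotoneOn (F R β μ) (Set.Icc 0 1) := by
  intro x hx y hy hxy i
  have hfac (j : Fin n) : 1 - β * R i j * y j ∈ unitInterval :=
    Icc.one_sub_mem (unitInterval.mul_mem (unitInterval.mul_mem hβ (hR i j)) ⟨hy.1 j, hy.2 j⟩)
  have hrec : 1 - (1 - μ) * x i ∈ unitInterval :=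
    Icc.one_sub_mem (unitInterval.mul_mem (Icc.one_sub_mem hμ) ⟨hx.1 i, hx.2 i⟩)
  simp only [F]
  gcongr 1 - ?_
  refine mul_le_mul ?_ ?_ (prod_nonneg fun j _ => (hfac j).1) hrec.1
  · gcongr
    · exact sub_nonneg.2 hμ.2
    · exact hxy i
  · refine prod_le_prod (fun j _ => (hfac j).1) fun j _ => ?_
    gcongr
    · exact mul_nonneg hβ.1 (hR i j).1
    · exact hxy j

theorem F_apply_lt_one (hR : ∀ i j, R i j ∈ unitInterval) (hβ : β ∈ Set.Ico 0 1)
    (hμ : μ ∈ Set.Ioc 0 1) (hx : x ∈ Set.Icc 0 1) (i : Fin n) : F R β μ x i < 1 := by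
  have hrec : 0 < 1 - (1 - μ) * x i := by
    linarith [mul_le_of_le_one_right (sub_nonneg.2 hμ.2) (hx.2 i), hμ.1]
  have hprod : 0 < ∏ j, (1 - β * R i j * x j) := prod_pos fun j _ => by
    have := (mul_le_of_le_one_right (mul_nonneg hβ.1 (hR i j).1) (hx.2 j)).trans
      (mul_le_of_le_one_right hβ.1 (hR i j).2)
    linarith [hβ.2]
  exact sub_lt_self 1 (mul_pos hrec hprod)

theorem le_F_apply (hR : ∀ i j, R i j ∈ unitInterval) (hβ : β ∈ unitInterval)
    (hμ : μ ∈ unitInterval) (hx : x ∈ Set.Icc 0 1) (i : Fin n)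
    (hinf : μ * x i ≤ (1 - x i) * ∑ j, β * R i j * x j) : x i ≤ F R β μ x i := by
  have ha (j : Fin n) : β * R i j * x j ∈ unitInterval :=
    unitInterval.mul_mem (unitInterval.mul_mem hβ (hR i j)) ⟨hx.1 j, hx.2 j⟩
  set S := ∑ j, β * R i j * x j
  set P := ∏ j, (1 - β * R i j * x j)
  have hS : 0 ≤ S := sum_nonneg fun j _ => (ha j).1
  have hPS : P * (1 + S) ≤ 1 := prod_one_sub_mul_one_add_sum_le_one _ fun j _ => ha j
  have hrec : 0 ≤ 1 - (1 - μ) * x i :=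
    (Icc.one_sub_mem (unitInterval.mul_mem (Icc.one_sub_mem hμ) ⟨hx.1 i, hx.2 i⟩)).1
  have key : (1 - (1 - μ) * x i) * P * (1 + S) ≤ (1 - x i) * (1 + S) :=
    calc (1 - (1 - μ) * x i) * P * (1 + S) = (1 - (1 - μ) * x i) * (P * (1 + S)) := by ring
      _ ≤ 1 - (1 - μ) * x i := mul_le_of_le_one_right hrec hPS
      _ ≤ (1 - x i) * (1 + S) := by linarith
  have := le_of_mul_le_mul_right key (by linarith)
  simp only [F]
  linarith

theorem exists_pos_smul_le_F (hR : ∀ i j, R i j ∈ unitInterval) (hβ : β ∈ unitInterval)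
    (hμ : μ ∈ unitInterval) {r : ℝ} {v : Fin n → ℝ} (hv0 : 0 ≤ v) (hRv : R *ᵥ v = r • v)
    (hμr : μ < β * r) : ∃ ε > (0 : ℝ), ε • v ∈ Set.Icc 0 1 ∧ ε • v ≤ F R β μ (ε • v) := by
  have hβr : 0 < β * r := hμ.1.trans_lt hμr
  obtain ⟨ε, hε, hεv⟩ := exists_pos_mul_le v (sub_pos.2 ((div_lt_one hβr).2 hμr))
  set x := ε • v
  have hRx : R *ᵥ x = r • x := by rw [mulVec_smul, hRv, smul_comm]
  have hle (i : Fin n) : μ / (β * r) ≤ 1 - x i := by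
    simp only [x, Pi.smul_apply, smul_eq_mul]
    linarith [hεv i]
  have hx : x ∈ Set.Icc 0 1 := ⟨fun i => mul_nonneg hε.le (hv0 i), fun i => by
    simp only [Pi.one_apply]
    linarith [hle i, div_nonneg hμ.1 hβr.le]⟩
  refine ⟨ε, hε, hx, fun i => le_F_apply hR hβ hμ hx i ?_⟩
  have hsum : ∑ j, β * R i j * x j = β * r * x i := by
    simp only [mul_assoc, ← mul_sum]
    exact congrArg (β * ·) (congrFun hRx i)
  calc μ * x i ≤ (1 - x i) * (β * r) * x i :=
        mul_le_mul_of_nonneg_right ((div_le_iff₀ hβr).1 (hle i)) (hx.1 i)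
    _ = (1 - x i) * ∑ j, β * R i j * x j := by rw [hsum]; ring

end MMCA

theorem interior_fixed_point_exists_general (n : ℕ) (R : Matrix (Fin n) (Fin n) ℝ)
    (hsymm : R.IsSymm) (hR : ∀ i j, R i j ∈ Set.Icc (0:ℝ) 1)
    (hirr : MatIrred R)
    (β μ : ℝ) (hβ : β ∈ Set.Ioo (0:ℝ) 1) (hμ : μ ∈ Set.Ioo (0:ℝ) 1)
    (hgt : μ / specRad R < β) :
    ∃ z₀ : Fin n → ℝ, (∀ i, z₀ i ∈ Set.Ioo (0:ℝ) 1) ∧ F R β μ z₀ = z₀ := by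
  cases isEmpty_or_nonempty (Fin n)
  · exact ⟨0, isEmptyElim, Subsingleton.elim _ _⟩
  have hR0 (i j : Fin n) : 0 ≤ R i j := (hR i j).1
  obtain ⟨r, v, hv0, hv, hRv, hquad⟩ := hsymm.exists_nonneg_eigenvector hR0
  obtain ⟨hr, hvpos⟩ := hirr.pos_of_mulVec_eq_smul hR0 hv0 hv hRv
  rw [specRad_eq_of_mulVec_eq_smul hR0 hv hRv hquad, div_lt_iff₀ hr] at hgt
  have hβ' : β ∈ unitInterval := Ioo_subset_Icc_self hβ
  have hμ' : μ ∈ unitInterval := Ioo_subset_Icc_self hμ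
  obtain ⟨ε, hε, hx, hsub⟩ := exists_pos_smul_le_F hR hβ' hμ' hv0 hRv hgt
  have hF_lt_one (y : Fin n → ℝ) (hy : y ∈ Set.Icc 0 1) (i : Fin n) : F R β μ y i < 1 :=
    F_apply_lt_one hR (Ioo_subset_Ico_self hβ) (Ioo_subset_Ioc_self hμ) hy i
  have hmono := (F_monotoneOn hR hβ' hμ').mono (Icc_subset_Icc_left hx.1)
  obtain ⟨z, hz, hfix⟩ := hmono.exists_isFixedPt_mem_Icc hx.2 hsub
    fun i => (hF_lt_one 1 (right_mem_Icc.2 zero_le_one) i).le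
  refine ⟨z, fun i => ⟨(mul_pos hε (hvpos i)).trans_le (hz.1 i), ?_⟩, hfix⟩
  rw [← hfix.eq]
  exact hF_lt_one z ⟨hx.1.trans hz.1, hz.2⟩ i

theorem interior_fixed_point_exists (n : ℕ) (hn : 2 ≤ n) (R : Matrix (Fin n) (Fin n) ℝ)
    (hsymm : R.IsSymm) (hR : ∀ i j, R i j ∈ Set.Icc (0:ℝ) 1)
    (hdiag : ∀ i, R i i = 0) (hirr : MatIrred R)
    (β μ : ℝ) (hβ : β ∈ Set.Ioo (0:ℝ) 1) (hμ : μ ∈ Set.Ioo (0:ℝ) 1)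
    (hgt : μ / specRad R < β) :
    ∃ z₀ : Fin n → ℝ, (∀ i, z₀ i ∈ Set.Ioo (0:ℝ) 1) ∧ F R β μ z₀ = z₀ :=
  interior_fixed_point_exists_general n R hsymm hR hirr β μ hβ hμ hgt
end

section
/- For every x ∈ [0,1)^n and every vector u ∈ ℝ^n with all components strictly positive, the vector DF(x)·u (the Jacobian matrix of F at x applied to u) has all components strictly positive. -/
open Filter Finset

theorem jacobian_strongly_positive (n : ℕ) (hn : 2 ≤ n) (R : Matrix (Fin n) (Fin n) ℝ)
    (hsymm : R.IsSymm) (hR : ∀ i j, R i j ∈ Set.Icc (0:ℝ) 1)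
    (hdiag : ∀ i, R i i = 0) (hirr : MatIrred R)
    (β μ : ℝ) (hβ : β ∈ Set.Ioo (0:ℝ) 1) (hμ : μ ∈ Set.Ioo (0:ℝ) 1)
    (x : Fin n → ℝ) (hx : ∀ i, x i ∈ Set.Ico (0:ℝ) 1)
    (u : Fin n → ℝ) (hu : ∀ i, 0 < u i) :
    ∀ i, 0 < fderiv ℝ (fun y => F R β μ y i) x u := by
  intro i
  classical
  obtain ⟨hβ0, hβ1⟩ := hβ
  obtain ⟨hμ0, hμ1⟩ := hμ
  set c : Fin n → ℝ := fun j => β * R i j with hc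
  set g : Fin n → (Fin n → ℝ) → ℝ := fun j y => 1 - c j * y j with hg
  -- derivatives of the factors
  have hgd : ∀ j, HasFDerivAt (g j)
      (-(c j • (ContinuousLinearMap.proj j : ((Fin n → ℝ) →L[ℝ] ℝ)))) x := by
    intro j
    have h1 : HasFDerivAt (fun y : Fin n → ℝ => y j)
        ((ContinuousLinearMap.proj j : ((Fin n → ℝ) →L[ℝ] ℝ))) x :=
      ((ContinuousLinearMap.proj (R := ℝ) (φ := fun _ : Fin n => ℝ) j)).hasFDerivAt
    have h2 := (h1.const_mul (c j)).const_sub 1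
    simpa [ContinuousLinearMap.smul_comp] using h2
  set S : (Fin n → ℝ) →L[ℝ] ℝ :=
    ∑ j, (∏ k ∈ Finset.univ.erase j, g k x) •
      (-(c j • (ContinuousLinearMap.proj j : ((Fin n → ℝ) →L[ℝ] ℝ)))) with hS
  have hP : HasFDerivAt (fun y => ∏ j, g j y) S x :=
    HasFDerivAt.finset_prod (fun j _ => hgd j)
  have hA : HasFDerivAt (fun y : Fin n → ℝ => 1 - (1 - μ) * y i)
      (-((1 - μ) • (ContinuousLinearMap.proj i : ((Fin n → ℝ) →L[ℝ] ℝ)))) x := by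
    have h1 : HasFDerivAt (fun y : Fin n → ℝ => y i)
        ((ContinuousLinearMap.proj i : ((Fin n → ℝ) →L[ℝ] ℝ))) x :=
      ((ContinuousLinearMap.proj (R := ℝ) (φ := fun _ : Fin n => ℝ) i)).hasFDerivAt
    simpa [ContinuousLinearMap.smul_comp] using (h1.const_mul (1 - μ)).const_sub 1
  have hAP := hA.mul hP
  have hF : HasFDerivAt (fun y => F R β μ y i)
      (-((1 - (1 - μ) * x i) • S +
        (∏ j, g j x) • (-((1 - μ) • (ContinuousLinearMap.proj i : ((Fin n → ℝ) →L[ℝ] ℝ)))))) x := by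
    have := hAP.const_sub 1
    simpa [F, hg, hc] using this
  rw [hF.fderiv]
  -- positivity facts
  have hgpos : ∀ k, 0 < g k x := by
    intro k
    have h1 := (hR i k).1
    have h2 := (hR i k).2
    have h3 := (hx k).1
    have h4 := (hx k).2
    have h5 : c k ≤ β := by
      simp only [hc]
      calc β * R i k ≤ β * 1 := by
            exact mul_le_mul_of_nonneg_left h2 hβ0.le
        _ = β := mul_one β
    have h6 : c k * x k ≤ β * x k := mul_le_mul_of_nonneg_right h5 h3
    have h7 : β * x k < β * 1 := mul_lt_mul_of_pos_left h4 hβ0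
    simp only [hg]; linarith
  have hPpos : 0 < ∏ j, g j x := Finset.prod_pos fun j _ => hgpos j
  have hApos : 0 < 1 - (1 - μ) * x i := by
    have h3 := (hx i).1
    have h4 := (hx i).2
    have h5 : (1 - μ) * x i ≤ 1 * x i :=
      mul_le_mul_of_nonneg_right (by linarith) h3
    linarith
  -- evaluate the derivative at u
  have hSu : S u = -∑ j, (∏ k ∈ Finset.univ.erase j, g k x) * (c j * u j) := by
    simp only [hS, ContinuousLinearMap.sum_apply, ContinuousLinearMap.smul_apply,
      ContinuousLinearMap.neg_apply, ContinuousLinearMap.proj_apply, smul_eq_mul,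
      ← Finset.sum_neg_distrib]
    apply Finset.sum_congr rfl
    intro j _
    ring
  have heval : (-((1 - (1 - μ) * x i) • S +
      (∏ j, g j x) • (-((1 - μ) • (ContinuousLinearMap.proj i : ((Fin n → ℝ) →L[ℝ] ℝ)))))) u
      = (∏ j, g j x) * ((1 - μ) * u i) +
        (1 - (1 - μ) * x i) * ∑ j, (∏ k ∈ Finset.univ.erase j, g k x) * (c j * u j) := by
    simp only [ContinuousLinearMap.neg_apply, ContinuousLinearMap.add_apply,
      ContinuousLinearMap.smul_apply, ContinuousLinearMap.proj_apply, smul_eq_mul, hSu]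
    ring
  rw [heval]
  have hsum : 0 ≤ ∑ j, (∏ k ∈ Finset.univ.erase j, g k x) * (c j * u j) := by
    apply Finset.sum_nonneg
    intro j _
    have h1 : 0 ≤ c j := by
      have := (hR i j).1
      simp only [hc]; positivity
    have h2 : 0 < ∏ k ∈ Finset.univ.erase j, g k x :=
      Finset.prod_pos fun k _ => hgpos k
    have := (hu j).le
    positivity
  have hfirst : 0 < (∏ j, g j x) * ((1 - μ) * u i) :=
    mul_pos hPpos (mul_pos (by linarith) (hu i))
  have := mul_nonneg hApos.le hsum
  linarith
end

section
/- For every x ∈ [0,1)^n, every index i, and every vector u ∈ ℝ^n with all components strictly positive, the Hessian quadratic form of the component F_i at x applied to u is strictly negative: ∑_{j=1}^n ∑_{k=1}^n u_j u_k · ∂²F_i/∂x_j∂x_k (x) < 0. -/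
open Filter Finset

/-!
Since `R i i = 0`, the self-factor `1 - (1 - μ) x_i` of `F_i` takes the place of the `i`-th
factor of the product, so `F_i z = 1 - ∏_j (1 - c_j z_j)` with coefficients `0 ≤ c_j ≤ 1`:
one affine factor per variable. The Hessian of such a function vanishes on the diagonal and
its `(j, k)` entry is `-c_j c_k ∏_{m ≠ j, k} (1 - c_m x_m) ≤ 0`. Irreducibility gives `j₀ ≠ i`
with `c_{j₀} = β r_{i j₀} > 0`, and `c_i = 1 - μ > 0`, so the `(i, j₀)` entry is strictly
negative.
-/

section ProdOneSubMul

variable {ι : Type*} [Fintype ι] [DecidableEq ι]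

theorem hasFDerivAt_prod_one_sub_mul_s15 (c : ι → ℝ) (s : Finset ι) (y : ι → ℝ) :
    HasFDerivAt (fun z : ι → ℝ => ∏ j ∈ s, (1 - c j * z j))
      (∑ j ∈ s, (∏ m ∈ s.erase j, (1 - c m * y m)) •
        -(c j • (ContinuousLinearMap.proj j : (ι → ℝ) →L[ℝ] ℝ))) y :=
  .finsetProd fun j _ => ((hasFDerivAt_apply j y).const_mul (c j)).const_sub 1

theorem fderiv_prod_one_sub_mul_apply_single (c : ι → ℝ) (s : Finset ι) (y : ι → ℝ) (k : ι) :
    fderiv ℝ (fun z : ι → ℝ => ∏ j ∈ s, (1 - c j * z j)) y (Pi.single k 1) =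
      if k ∈ s then -(c k * ∏ m ∈ s.erase k, (1 - c m * y m)) else 0 := by
  rw [(hasFDerivAt_prod_one_sub_mul_s15 c s y).fderiv]
  simp only [_root_.sum_apply, smul_apply, neg_apply, ContinuousLinearMap.proj_apply,
    Pi.single_apply]
  split_ifs <;> simp_all [mul_comm]

theorem fderiv_fderiv_prod_one_sub_mul_apply_single (c x : ι → ℝ) (j k : ι) :
    fderiv ℝ (fun y => fderiv ℝ (fun z : ι → ℝ => ∏ m, (1 - c m * z m)) y (Pi.single k 1)) x
        (Pi.single j 1) =
      if j = k then 0 else c j * c k * ∏ m ∈ (univ.erase k).erase j, (1 - c m * x m) := by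
  simp only [fderiv_prod_one_sub_mul_apply_single, mem_univ, if_true]
  rw [fderiv_fun_neg, fderiv_const_mul (hasFDerivAt_prod_one_sub_mul_s15 c _ x).differentiableAt]
  simp only [neg_apply, smul_apply, smul_eq_mul, fderiv_prod_one_sub_mul_apply_single,
    mem_erase, mem_univ, and_true]
  by_cases hjk : j = k
  · simp [hjk]
  · simp only [hjk, ne_eq, not_false_eq_true, if_true, if_false]
    ring

theorem sum_mul_fderiv_fderiv_prod_one_sub_mul_pos {c x u : ι → ℝ} (hc : ∀ m, 0 ≤ c m)
    (hcx : ∀ m, c m * x m < 1) (hu : ∀ j, 0 < u j) {j₀ k₀ : ι} (hne : j₀ ≠ k₀)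
    (hj₀ : 0 < c j₀) (hk₀ : 0 < c k₀) :
    0 < ∑ j, ∑ k, u j * u k *
      fderiv ℝ (fun y => fderiv ℝ (fun z : ι → ℝ => ∏ m, (1 - c m * z m)) y (Pi.single k 1)) x
        (Pi.single j 1) := by
  simp only [fderiv_fderiv_prod_one_sub_mul_apply_single]
  have hprod : ∀ t : Finset ι, 0 < ∏ m ∈ t, (1 - c m * x m) :=
    fun t => prod_pos fun m _ => sub_pos.2 (hcx m)
  have hterm : ∀ j k, 0 ≤ u j * u k *
      if j = k then 0 else c j * c k * ∏ m ∈ (univ.erase k).erase j, (1 - c m * x m) := by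
    intro j k
    split_ifs
    · simp
    · have := hprod ((univ.erase k).erase j)
      have := hu j; have := hu k; have := hc j; have := hc k
      positivity
  refine sum_pos' (fun j _ => sum_nonneg fun k _ => hterm j k) ⟨j₀, mem_univ _, ?_⟩
  refine sum_pos' (fun k _ => hterm j₀ k) ⟨k₀, mem_univ _, ?_⟩
  have := hprod ((univ.erase k₀).erase j₀)
  have := hu j₀; have := hu k₀
  rw [if_neg hne]
  positivity

end ProdOneSubMul

theorem MatIrred.exists_ne_zero {n : ℕ} {R : Matrix (Fin n) (Fin n) ℝ} (h : MatIrred R)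
    (i : Fin n) : ∃ j, R i j ≠ 0 := by
  by_contra! hrow
  obtain ⟨k, hk, hRk⟩ := h i i
  obtain ⟨m, rfl⟩ := Nat.exists_eq_add_one_of_ne_zero hk.ne'
  exact hRk (by simp [pow_succ', Matrix.mul_apply, hrow])

section MMCA

variable {n : ℕ}

def Fcoeff (R : Matrix (Fin n) (Fin n) ℝ) (β μ : ℝ) (i j : Fin n) : ℝ :=
  if j = i then 1 - μ else β * R i j

variable {R : Matrix (Fin n) (Fin n) ℝ} {β μ : ℝ}

theorem Fcoeff_mem_Icc (hR : ∀ i j, R i j ∈ Set.Icc (0:ℝ) 1) (hβ : β ∈ Set.Icc (0:ℝ) 1)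
    (hμ : μ ∈ Set.Icc (0:ℝ) 1) (i j : Fin n) : Fcoeff R β μ i j ∈ Set.Icc (0:ℝ) 1 := by
  unfold Fcoeff
  split_ifs
  · exact ⟨sub_nonneg.2 hμ.2, sub_le_self _ hμ.1⟩
  · exact ⟨mul_nonneg hβ.1 (hR i j).1, mul_le_one₀ hβ.2 (hR i j).1 (hR i j).2⟩

theorem F_apply_eq_one_sub_prod {i : Fin n} (hii : R i i = 0) (z : Fin n → ℝ) :
    F R β μ z i = 1 - ∏ j, (1 - Fcoeff R β μ i j * z j) := by
  have hrest : ∏ j ∈ univ.erase i, (1 - β * R i j * z j) =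
      ∏ j ∈ univ.erase i, (1 - Fcoeff R β μ i j * z j) :=
    prod_congr rfl fun j hj => by simp [Fcoeff, ne_of_mem_erase hj]
  rw [F, ← mul_prod_erase univ _ (mem_univ i), ← mul_prod_erase univ _ (mem_univ i), hrest]
  simp [Fcoeff, hii]

theorem fderiv_fderiv_F_apply_single {i : Fin n} (hii : R i i = 0) (x : Fin n → ℝ) (j k : Fin n) :
    fderiv ℝ (fun y => fderiv ℝ (fun z => F R β μ z i) y (Pi.single k 1)) x (Pi.single j 1) =
      -fderiv ℝ (fun y => fderiv ℝ (fun z => ∏ m, (1 - Fcoeff R β μ i m * z m)) y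
        (Pi.single k 1)) x (Pi.single j 1) := by
  simp only [F_apply_eq_one_sub_prod hii, fderiv_const_sub, neg_apply, fderiv_fun_neg]

end MMCA

theorem hessian_strictly_negative_general (n : ℕ) (R : Matrix (Fin n) (Fin n) ℝ)
    (hR : ∀ i j, R i j ∈ Set.Icc (0:ℝ) 1)
    (hdiag : ∀ i, R i i = 0) (hirr : MatIrred R)
    (β μ : ℝ) (hβ : β ∈ Set.Ioo (0:ℝ) 1) (hμ : μ ∈ Set.Ioo (0:ℝ) 1)
    (x : Fin n → ℝ) (hx : ∀ i, x i ∈ Set.Ico (0:ℝ) 1) (i : Fin n)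
    (u : Fin n → ℝ) (hu : ∀ j, 0 < u j) :
    ∑ j, ∑ k, u j * u k *
      fderiv ℝ (fun y => fderiv ℝ (fun z => F R β μ z i) y (Pi.single k 1)) x
        (Pi.single j 1) < 0 := by
  obtain ⟨j₀, hj₀⟩ := hirr.exists_ne_zero i
  have hj₀i : j₀ ≠ i := by rintro rfl; exact hj₀ (hdiag j₀)
  have hc := Fcoeff_mem_Icc hR (Set.Ioo_subset_Icc_self hβ) (Set.Ioo_subset_Icc_self hμ) i
  have hcx : ∀ m, Fcoeff R β μ i m * x m < 1 := fun m =>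
    (mul_le_of_le_one_left (hx m).1 (hc m).2).trans_lt (hx m).2
  simp only [fderiv_fderiv_F_apply_single (hdiag i), mul_neg, sum_neg_distrib, neg_lt_zero]
  refine sum_mul_fderiv_fderiv_prod_one_sub_mul_pos (fun m => (hc m).1) hcx hu hj₀i ?_ ?_
  · simpa [Fcoeff, hj₀i] using mul_pos hβ.1 (lt_of_le_of_ne (hR i j₀).1 hj₀.symm)
  · simpa [Fcoeff] using hμ.2

theorem hessian_strictly_negative (n : ℕ) (hn : 2 ≤ n) (R : Matrix (Fin n) (Fin n) ℝ)
    (hsymm : R.IsSymm) (hR : ∀ i j, R i j ∈ Set.Icc (0:ℝ) 1)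
    (hdiag : ∀ i, R i i = 0) (hirr : MatIrred R)
    (β μ : ℝ) (hβ : β ∈ Set.Ioo (0:ℝ) 1) (hμ : μ ∈ Set.Ioo (0:ℝ) 1)
    (x : Fin n → ℝ) (hx : ∀ i, x i ∈ Set.Ico (0:ℝ) 1) (i : Fin n)
    (u : Fin n → ℝ) (hu : ∀ j, 0 < u j) :
    ∑ j, ∑ k, u j * u k *
      fderiv ℝ (fun y => fderiv ℝ (fun z => F R β μ z i) y (Pi.single k 1)) x
        (Pi.single j 1) < 0 :=
  hessian_strictly_negative_general n R hR hdiag hirr β μ hβ hμ x hx i u hu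
end

section
/- Regard F(x;β) as a function of both x and β. For every x ∈ [0,1]^n and every index i, the partial derivative ∂F_i(x;β)/∂β is nonnegative; consequently, if 0 < β₁ ≤ β₂ < 1, then F(x;β₁) ⪯ F(x;β₂) componentwise for every x ∈ [0,1]^n. -/
open Filter Finset

/-! Each factor `1 - β R_ij x_j` lies in `[0,1]` and decreases in `β`, so the product
decreases and `F_i = 1 - (1 - (1-μ) x_i) ∏_j (1 - β R_ij x_j)` increases in `β` on `[0,1]`.
A function monotone on a neighbourhood of `β` has nonnegative derivative at `β`
(whether or not it is differentiable there). -/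

theorem antitoneOn_prod_one_sub_mul {ι : Type*} [Fintype ι] {c : ι → ℝ}
    (hc : ∀ j, c j ∈ Set.Icc (0 : ℝ) 1) :
    AntitoneOn (fun b => ∏ j, (1 - b * c j)) (Set.Icc 0 1) := by
  intro a _ b hb hab
  refine Finset.prod_le_prod (fun j _ => ?_) (fun j _ => ?_)
  · exact sub_nonneg.2 (unitInterval.mul_mem hb (hc j)).2
  · exact sub_le_sub_left (mul_le_mul_of_nonneg_right hab (hc j).1) 1

theorem F_apply_eq_prod {n : ℕ} (R : Matrix (Fin n) (Fin n) ℝ) (β μ : ℝ) (x : Fin n → ℝ)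
    (i : Fin n) :
    F R β μ x i = 1 - (1 - (1 - μ) * x i) * ∏ j, (1 - β * (R i j * x j)) := by
  simp only [F, mul_assoc]

theorem monotoneOn_F_apply {n : ℕ} {R : Matrix (Fin n) (Fin n) ℝ} {μ : ℝ} {x : Fin n → ℝ}
    {i : Fin n} (hR : ∀ j, R i j ∈ Set.Icc (0 : ℝ) 1) (hμ : 0 ≤ μ)
    (hx : ∀ j, x j ∈ Set.Icc (0 : ℝ) 1) :
    MonotoneOn (fun b => F R b μ x i) (Set.Icc 0 1) := by
  intro a ha b hb hab
  have hprod := antitoneOn_prod_one_sub_mul (fun j => unitInterval.mul_mem (hR j) (hx j)) ha hb hab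
  have hcoeff : 0 ≤ 1 - (1 - μ) * x i := by nlinarith [(hx i).1, (hx i).2]
  simp only [F_apply_eq_prod]
  exact sub_le_sub_left (mul_le_mul_of_nonneg_left hprod hcoeff) 1

theorem monotone_in_beta_general (n : ℕ) (R : Matrix (Fin n) (Fin n) ℝ)
    (hR : ∀ i j, R i j ∈ Set.Icc (0:ℝ) 1)
    (μ : ℝ) (hμ : μ ∈ Set.Ioo (0:ℝ) 1) :
    (∀ β : ℝ, β ∈ Set.Ioo (0:ℝ) 1 →
      ∀ x : Fin n → ℝ, (∀ i, x i ∈ Set.Icc (0:ℝ) 1) →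
        ∀ i, 0 ≤ deriv (fun b => F R b μ x i) β) ∧
    (∀ β₁ β₂ : ℝ, 0 < β₁ → β₁ ≤ β₂ → β₂ < 1 →
      ∀ x : Fin n → ℝ, (∀ i, x i ∈ Set.Icc (0:ℝ) 1) →
        ∀ i, F R β₁ μ x i ≤ F R β₂ μ x i) := by
  have hmono : ∀ x : Fin n → ℝ, (∀ i, x i ∈ Set.Icc (0:ℝ) 1) →
      ∀ i, MonotoneOn (fun b => F R b μ x i) (Set.Icc 0 1) :=
    fun x hx i => monotoneOn_F_apply (hR i) hμ.1.le hx
  refine ⟨fun β hβ x hx i => ?_, fun β₁ β₂ h₁ h₁₂ h₂ x hx i => ?_⟩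
  · rw [← derivWithin_of_mem_nhds (Icc_mem_nhds hβ.1 hβ.2)]
    exact (hmono x hx i).derivWithin_nonneg
  · exact hmono x hx i ⟨h₁.le, h₁₂.trans h₂.le⟩ ⟨h₁.le.trans h₁₂, h₂.le⟩ h₁₂

theorem monotone_in_beta (n : ℕ) (hn : 2 ≤ n) (R : Matrix (Fin n) (Fin n) ℝ)
    (hsymm : R.IsSymm) (hR : ∀ i j, R i j ∈ Set.Icc (0:ℝ) 1)
    (hdiag : ∀ i, R i i = 0) (hirr : MatIrred R)
    (μ : ℝ) (hμ : μ ∈ Set.Ioo (0:ℝ) 1) :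
    (∀ β : ℝ, β ∈ Set.Ioo (0:ℝ) 1 →
      ∀ x : Fin n → ℝ, (∀ i, x i ∈ Set.Icc (0:ℝ) 1) →
        ∀ i, 0 ≤ deriv (fun b => F R b μ x i) β) ∧
    (∀ β₁ β₂ : ℝ, 0 < β₁ → β₁ ≤ β₂ → β₂ < 1 →
      ∀ x : Fin n → ℝ, (∀ i, x i ∈ Set.Icc (0:ℝ) 1) →
        ∀ i, F R β₁ μ x i ≤ F R β₂ μ x i) :=
  monotone_in_beta_general n R hR μ hμ
end
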